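/- arXiv:2112.15406 — 4 statements merged into one kernel-verified Lean document; each statement's English description precedes it below -/
import Mathlib

section
/- Let w_n → w weakly-star in L^∞_ξ M_ζ ∩ L^∞_ζ M_ξ, let φ_n → φ strongly in L¹([0,1]) with sup_n ‖φ_n‖_{L^∞} < ∞. Then ∫₀¹ φ_n(ζ) w_n(·,dζ) → ∫₀¹ φ(ζ) w(·,dζ) weakly-star in L^∞([0,1]). -/
/-!
For an extended graphon `(u, v)` of norm at most `M`, the pairing
`(ψ, φ) ↦ ∫ ψ(ξ) ∫ φ(ζ) u(ξ, dζ) dξ` is Lipschitz in `ψ ∈ L¹` with constant `‖φ‖_∞ M`, and, through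
the duality identity with the other disintegration `v`, Lipschitz in `φ ∈ L¹` with constant
`‖ψ‖_∞ M`. Weak-star convergence handles bounded continuous `ψ` and `φ`, since `ψ ⊗ φ` is an
admissible test function. Density of bounded continuous functions in `L¹` then removes the
continuity of `φ`, the second Lipschitz bound absorbs the strong convergence `φₙ → φ`, and a last
density argument removes the continuity of `ψ`; all bounds are uniform along the sequence.
-/

open MeasureTheory Filter

/-- Integral of a function against a finite signed measure, via Jordan decomposition. -/
noncomputable def sInt (s : SignedMeasure ℝ) (φ : ℝ → ℝ) : ℝ :=
  (∫ ζ, φ ζ ∂s.toJordanDecomposition.posPart) -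
    ∫ ζ, φ ζ ∂s.toJordanDecomposition.negPart

open Topology
open scoped NNReal BoundedContinuousFunction

lemma Measurable.integrable_of_abs_le {α : Type*} [MeasurableSpace α] {μ : Measure α}
    [IsFiniteMeasure μ] {f : α → ℝ} {B : ℝ} (hf : Measurable f) (hB : ∀ x, |f x| ≤ B) :
    Integrable f μ :=
  .of_bound hf.aestronglyMeasurable B (ae_of_all _ hB)

lemma abs_integral_mul_le_of_ae_abs_le {α : Type*} [MeasurableSpace α] {μ : Measure α}
    {h X : α → ℝ} {C : ℝ} (hh : Integrable h μ) (hX : ∀ᵐ x ∂μ, |X x| ≤ C) :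
    |∫ x, h x * X x ∂μ| ≤ (∫ x, |h x| ∂μ) * C := by
  rw [← integral_mul_const C]
  refine norm_integral_le_of_norm_le (f := fun x => h x * X x) (hh.abs.mul_const C)
    (hX.mono fun x hx => ?_)
  rw [Real.norm_eq_abs, abs_mul]
  exact mul_le_mul_of_nonneg_left hx (abs_nonneg _)

lemma tendsto_of_forall_abs_sub_le_mul {ι : Type*} {l : Filter ι} {a : ι → ℝ} {b K : ℝ}
    (h : ∀ δ > 0, ∃ c : ι → ℝ, ∃ c' : ℝ, Tendsto c l (𝓝 c') ∧
      (∀ᶠ i in l, |a i - c i| ≤ δ * K) ∧ |b - c'| ≤ δ * K) :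
    Tendsto a l (𝓝 b) := by
  refine Metric.tendsto_nhds.mpr fun ε hε => ?_
  set δ := ε / (3 * (|K| + 1))
  have hδK : δ * K < ε / 3 := by
    have hδ : δ * (|K| + 1) = ε / 3 := by simp only [δ]; field_simp
    nlinarith [le_abs_self K, show 0 < δ by positivity]
  obtain ⟨c, c', hc, hac, hbc⟩ := h δ (by positivity)
  filter_upwards [hac, Metric.tendsto_nhds.mp hc (ε / 3) (by positivity)] with i hai hci
  rw [Real.dist_eq] at hci ⊢
  have := abs_sub_le (a i) (c i) b
  have := abs_sub_le (c i) c' b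
  rw [abs_sub_comm] at hbc
  linarith

section sInt

variable (s : SignedMeasure ℝ) {φ ψ : ℝ → ℝ} {B C : ℝ}

lemma abs_sInt_le_of_totalVariation_le {M : ℝ≥0} (hs : s.totalVariation Set.univ ≤ M)
    (hφ : ∀ ζ, |φ ζ| ≤ B) : |sInt s φ| ≤ B * M := by
  have hB : 0 ≤ B := (abs_nonneg _).trans (hφ 0)
  have hφ' : ∀ ζ, ‖φ ζ‖ ≤ B := hφ
  have hpos := norm_integral_le_of_norm_le_const (μ := s.toJordanDecomposition.posPart)
    (.of_forall hφ')
  have hneg := norm_integral_le_of_norm_le_const (μ := s.toJordanDecomposition.negPart)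
    (.of_forall hφ')
  have htv : (s.toJordanDecomposition.posPart.real Set.univ)
      + s.toJordanDecomposition.negPart.real Set.univ ≤ M := by
    rw [SignedMeasure.totalVariation, Measure.add_apply] at hs
    simpa only [measureReal_def, ← ENNReal.toReal_add (measure_ne_top _ _) (measure_ne_top _ _)]
      using ENNReal.toReal_le_coe_of_le_coe hs
  rw [Real.norm_eq_abs] at hpos hneg
  calc |sInt s φ| ≤ B * s.toJordanDecomposition.posPart.real Set.univ
        + B * s.toJordanDecomposition.negPart.real Set.univ :=
        (abs_sub _ _).trans (add_le_add hpos hneg)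
    _ ≤ B * M := by rw [← mul_add]; exact mul_le_mul_of_nonneg_left htv hB

lemma sInt_sub (hφ : Measurable φ) (hψ : Measurable ψ) (hφB : ∀ ζ, |φ ζ| ≤ B)
    (hψB : ∀ ζ, |ψ ζ| ≤ C) : sInt s (fun ζ => φ ζ - ψ ζ) = sInt s φ - sInt s ψ := by
  rw [sInt, sInt, sInt,
    integral_sub (hφ.integrable_of_abs_le hφB) (hψ.integrable_of_abs_le hψB),
    integral_sub (hφ.integrable_of_abs_le hφB) (hψ.integrable_of_abs_le hψB)]
  ring

lemma sInt_const_mul (c : ℝ) : sInt s (fun ζ => c * φ ζ) = c * sInt s φ := by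
  rw [sInt, sInt, integral_const_mul, integral_const_mul, mul_sub]

end sInt

/-- `u ξ = w(ξ, dζ)` and `v ζ = w(dξ, ζ)` are the two disintegrations of an extended graphon `w`
with norm at most `M` in `L^∞_ξ M_ζ ∩ L^∞_ζ M_ξ`; the last field says that they disintegrate the
same bivariate measure. -/
structure IsExtendedGraphon (μ : Measure ℝ) (u v : ℝ → SignedMeasure ℝ) (M : ℝ≥0) : Prop where
  measurable_sInt : ∀ φ : ℝ → ℝ, Measurable φ → (∃ B, ∀ ζ, |φ ζ| ≤ B) →
    Measurable fun ξ => sInt (u ξ) φ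
  ae_totalVariation_le : ∀ᵐ ξ ∂μ, (u ξ).totalVariation Set.univ ≤ M
  ae_totalVariation_dual_le : ∀ᵐ ζ ∂μ, (v ζ).totalVariation Set.univ ≤ M
  integral_mul_sInt_eq : ∀ φ ψ : ℝ → ℝ, Measurable φ → Measurable ψ →
    (∃ B, ∀ x, |φ x| ≤ B) → (∃ B, ∀ x, |ψ x| ≤ B) →
    ∫ ξ, ψ ξ * sInt (u ξ) φ ∂μ = ∫ ζ, φ ζ * sInt (v ζ) ψ ∂μ

/-- Weak-star convergence in `L^∞_ξ M_ζ`, tested against bounded functions `g(ξ, ζ)` that are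
continuous in `ζ`. -/
def TendstoWeakStar {ι : Type*} (l : Filter ι) (μ : Measure ℝ) (w : ι → ℝ → SignedMeasure ℝ)
    (wl : ℝ → SignedMeasure ℝ) : Prop :=
  ∀ g : ℝ → ℝ → ℝ, Measurable (Function.uncurry g) → (∀ ξ, Continuous (g ξ)) →
    (∃ B, ∀ ξ ζ, |g ξ ζ| ≤ B) →
    Tendsto (fun n => ∫ ξ, sInt (w n ξ) (g ξ) ∂μ) l (𝓝 (∫ ξ, sInt (wl ξ) (g ξ) ∂μ))

namespace IsExtendedGraphon

variable {μ : Measure ℝ} {u v : ℝ → SignedMeasure ℝ} {M : ℝ≥0} {φ φ' ψ ψ' : ℝ → ℝ} {B B' C : ℝ}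

lemma ae_abs_sInt_le (hW : IsExtendedGraphon μ u v M) (hφ : ∀ ζ, |φ ζ| ≤ B) :
    ∀ᵐ ξ ∂μ, |sInt (u ξ) φ| ≤ B * M :=
  hW.ae_totalVariation_le.mono fun _ h => abs_sInt_le_of_totalVariation_le _ h hφ

lemma ae_abs_sInt_dual_le (hW : IsExtendedGraphon μ u v M) (hψ : ∀ ξ, |ψ ξ| ≤ C) :
    ∀ᵐ ζ ∂μ, |sInt (v ζ) ψ| ≤ C * M :=
  hW.ae_totalVariation_dual_le.mono fun _ h => abs_sInt_le_of_totalVariation_le _ h hψ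

lemma integrable_mul_sInt (hW : IsExtendedGraphon μ u v M) (hψ : Integrable ψ μ)
    (hφ : Measurable φ) (hφB : ∀ ζ, |φ ζ| ≤ B) :
    Integrable (fun ξ => ψ ξ * sInt (u ξ) φ) μ :=
  hψ.mul_bdd (hW.measurable_sInt φ hφ ⟨B, hφB⟩).aestronglyMeasurable (hW.ae_abs_sInt_le hφB)

lemma abs_integral_mul_sInt_sub_le_left (hW : IsExtendedGraphon μ u v M) (hφ : Measurable φ)
    (hφB : ∀ ζ, |φ ζ| ≤ B) (hψ : Integrable ψ μ) (hψ' : Integrable ψ' μ) :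
    |∫ ξ, ψ ξ * sInt (u ξ) φ ∂μ - ∫ ξ, ψ' ξ * sInt (u ξ) φ ∂μ|
      ≤ (∫ ξ, |ψ ξ - ψ' ξ| ∂μ) * (B * M) := by
  rw [← integral_sub (hW.integrable_mul_sInt hψ hφ hφB) (hW.integrable_mul_sInt hψ' hφ hφB)]
  simp_rw [← sub_mul]
  exact abs_integral_mul_le_of_ae_abs_le (hψ.sub hψ') (hW.ae_abs_sInt_le hφB)

lemma abs_integral_mul_sInt_sub_le_right [IsFiniteMeasure μ] (hW : IsExtendedGraphon μ u v M)
    (hφ : Measurable φ) (hφ' : Measurable φ') (hφB : ∀ ζ, |φ ζ| ≤ B) (hφ'B : ∀ ζ, |φ' ζ| ≤ B')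
    (hψ : Measurable ψ) (hψB : ∀ ξ, |ψ ξ| ≤ C) :
    |∫ ξ, ψ ξ * sInt (u ξ) φ ∂μ - ∫ ξ, ψ ξ * sInt (u ξ) φ' ∂μ|
      ≤ (∫ ζ, |φ ζ - φ' ζ| ∂μ) * (C * M) := by
  have hsubB : ∀ ζ, |φ ζ - φ' ζ| ≤ B + B' := fun ζ =>
    (abs_sub _ _).trans (add_le_add (hφB ζ) (hφ'B ζ))
  have hψi : Integrable ψ μ := hψ.integrable_of_abs_le hψB
  rw [← integral_sub (hW.integrable_mul_sInt hψi hφ hφB) (hW.integrable_mul_sInt hψi hφ' hφ'B)]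
  simp_rw [← mul_sub, ← sInt_sub _ hφ hφ' hφB hφ'B]
  rw [hW.integral_mul_sInt_eq (fun ζ => φ ζ - φ' ζ) ψ (hφ.sub hφ') hψ ⟨_, hsubB⟩ ⟨C, hψB⟩]
  exact abs_integral_mul_le_of_ae_abs_le ((hφ.sub hφ').integrable_of_abs_le hsubB)
    (hW.ae_abs_sInt_dual_le hψB)

end IsExtendedGraphon

namespace TendstoWeakStar

variable {ι : Type*} {l : Filter ι} {μ : Measure ℝ} {w v : ι → ℝ → SignedMeasure ℝ}
  {wl vl : ℝ → SignedMeasure ℝ} {M : ℝ≥0}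

lemma tendsto_integral_mul_sInt_of_continuous (hws : TendstoWeakStar l μ w wl)
    (ψ φ : ℝ →ᵇ ℝ) :
    Tendsto (fun n => ∫ ξ, ψ ξ * sInt (w n ξ) φ ∂μ) l (𝓝 (∫ ξ, ψ ξ * sInt (wl ξ) φ ∂μ)) := by
  have hg := hws (fun ξ ζ => ψ ξ * φ ζ) (ψ.continuous.fst'.mul φ.continuous.snd').measurable
    (fun _ => continuous_const.mul φ.continuous) ⟨‖ψ‖ * ‖φ‖, fun ξ ζ => by
      rw [abs_mul]
      exact mul_le_mul (ψ.norm_coe_le_norm ξ) (φ.norm_coe_le_norm ζ) (abs_nonneg _)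
        (norm_nonneg _)⟩
  simpa only [sInt_const_mul] using hg

lemma tendsto_integral_mul_sInt_of_measurable [IsFiniteMeasure μ]
    (hws : TendstoWeakStar l μ w wl) (hW : ∀ n, IsExtendedGraphon μ (w n) (v n) M)
    (hWl : IsExtendedGraphon μ wl vl M) (ψ : ℝ →ᵇ ℝ) {φ : ℝ → ℝ} {B : ℝ} (hφ : Measurable φ)
    (hφB : ∀ ζ, |φ ζ| ≤ B) :
    Tendsto (fun n => ∫ ξ, ψ ξ * sInt (w n ξ) φ ∂μ) l (𝓝 (∫ ξ, ψ ξ * sInt (wl ξ) φ ∂μ)) := by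
  refine tendsto_of_forall_abs_sub_le_mul (K := ‖ψ‖ * M) fun δ hδ => ?_
  obtain ⟨φt, hφt, -⟩ :=
    (hφ.integrable_of_abs_le hφB (μ := μ)).exists_boundedContinuous_integral_sub_le hδ
  have hclose : ∀ {u v'}, IsExtendedGraphon μ u v' M →
      |∫ ξ, ψ ξ * sInt (u ξ) φ ∂μ - ∫ ξ, ψ ξ * sInt (u ξ) φt ∂μ| ≤ δ * (‖ψ‖ * M) := fun hu =>
    (hu.abs_integral_mul_sInt_sub_le_right hφ φt.continuous.measurable hφB φt.norm_coe_le_norm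
      ψ.continuous.measurable ψ.norm_coe_le_norm).trans
      (mul_le_mul_of_nonneg_right hφt (by positivity))
  exact ⟨_, _, hws.tendsto_integral_mul_sInt_of_continuous ψ φt,
    .of_forall fun n => hclose (hW n), hclose hWl⟩

lemma tendsto_integral_mul_sInt_of_tendsto_integral_abs_sub [IsFiniteMeasure μ]
    (hws : TendstoWeakStar l μ w wl) (hW : ∀ n, IsExtendedGraphon μ (w n) (v n) M)
    (hWl : IsExtendedGraphon μ wl vl M) (ψ : ℝ →ᵇ ℝ) {φ : ι → ℝ → ℝ} {φl : ℝ → ℝ} {B : ℝ}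
    (hφ : ∀ n, Measurable (φ n)) (hφl : Measurable φl) (hφB : ∀ n ζ, |φ n ζ| ≤ B)
    (hφlB : ∀ ζ, |φl ζ| ≤ B) (hφL1 : Tendsto (fun n => ∫ ζ, |φ n ζ - φl ζ| ∂μ) l (𝓝 0)) :
    Tendsto (fun n => ∫ ξ, ψ ξ * sInt (w n ξ) (φ n) ∂μ) l
      (𝓝 (∫ ξ, ψ ξ * sInt (wl ξ) φl ∂μ)) := by
  refine (hws.tendsto_integral_mul_sInt_of_measurable hW hWl ψ hφl hφlB).congr_dist ?_
  have hbound : Tendsto (fun n => (∫ ζ, |φ n ζ - φl ζ| ∂μ) * (‖ψ‖ * M)) l (𝓝 0) := by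
    simpa only [zero_mul] using hφL1.mul_const (‖ψ‖ * (M : ℝ))
  refine squeeze_zero (fun _ => dist_nonneg) (fun n => ?_) hbound
  rw [Real.dist_eq, abs_sub_comm]
  exact (hW n).abs_integral_mul_sInt_sub_le_right (hφ n) hφl (hφB n) hφlB
    ψ.continuous.measurable ψ.norm_coe_le_norm

lemma tendsto_integral_mul_sInt_of_integrable [IsFiniteMeasure μ]
    (hws : TendstoWeakStar l μ w wl) (hW : ∀ n, IsExtendedGraphon μ (w n) (v n) M)
    (hWl : IsExtendedGraphon μ wl vl M) {φ : ι → ℝ → ℝ} {φl : ℝ → ℝ} {B : ℝ}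
    (hφ : ∀ n, Measurable (φ n)) (hφl : Measurable φl) (hφB : ∀ n ζ, |φ n ζ| ≤ B)
    (hφlB : ∀ ζ, |φl ζ| ≤ B) (hφL1 : Tendsto (fun n => ∫ ζ, |φ n ζ - φl ζ| ∂μ) l (𝓝 0))
    {ψ : ℝ → ℝ} (hψ : Integrable ψ μ) :
    Tendsto (fun n => ∫ ξ, ψ ξ * sInt (w n ξ) (φ n) ∂μ) l
      (𝓝 (∫ ξ, ψ ξ * sInt (wl ξ) φl ∂μ)) := by
  have hBM : 0 ≤ B * M := mul_nonneg ((abs_nonneg _).trans (hφlB 0)) M.coe_nonneg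
  refine tendsto_of_forall_abs_sub_le_mul (K := B * M) fun δ hδ => ?_
  obtain ⟨ψt, hψt, hψti⟩ := hψ.exists_boundedContinuous_integral_sub_le hδ
  refine ⟨_, _, hws.tendsto_integral_mul_sInt_of_tendsto_integral_abs_sub hW hWl ψt hφ hφl
    hφB hφlB hφL1, .of_forall fun n => ?_, ?_⟩
  · exact ((hW n).abs_integral_mul_sInt_sub_le_left (hφ n) (hφB n) hψ hψti).trans
      (mul_le_mul_of_nonneg_right hψt hBM)
  · exact (hWl.abs_integral_mul_sInt_sub_le_left hφl hφlB hψ hψti).trans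
      (mul_le_mul_of_nonneg_right hψt hBM)

end TendstoWeakStar

theorem extended_graphon_weak_star_continuity_general
    (w : ℕ → ℝ → SignedMeasure ℝ) (wl : ℝ → SignedMeasure ℝ)
    (v : ℕ → ℝ → SignedMeasure ℝ) (vl : ℝ → SignedMeasure ℝ) (M : ℝ)
    (hmeas : ∀ n, ∀ φ : ℝ → ℝ, Measurable φ → (∃ B, ∀ ζ, |φ ζ| ≤ B) →
      Measurable (fun ξ => sInt (w n ξ) φ))
    (hmeasl : ∀ φ : ℝ → ℝ, Measurable φ → (∃ B, ∀ ζ, |φ ζ| ≤ B) →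
      Measurable (fun ξ => sInt (wl ξ) φ))
    (hMw : ∀ n, ∀ᵐ ξ ∂(volume.restrict (Set.Icc (0 : ℝ) 1)),
      (w n ξ).totalVariation Set.univ ≤ ENNReal.ofReal M)
    (hMv : ∀ n, ∀ᵐ ζ ∂(volume.restrict (Set.Icc (0 : ℝ) 1)),
      (v n ζ).totalVariation Set.univ ≤ ENNReal.ofReal M)
    (hMwl : ∀ᵐ ξ ∂(volume.restrict (Set.Icc (0 : ℝ) 1)),
      (wl ξ).totalVariation Set.univ ≤ ENNReal.ofReal M)
    (hMvl : ∀ᵐ ζ ∂(volume.restrict (Set.Icc (0 : ℝ) 1)),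
      (vl ζ).totalVariation Set.univ ≤ ENNReal.ofReal M)
    (hdual : ∀ n, ∀ φ ψ : ℝ → ℝ, Measurable φ → Measurable ψ →
      (∃ B, ∀ x, |φ x| ≤ B) → (∃ B, ∀ x, |ψ x| ≤ B) →
      ∫ ξ in Set.Icc (0 : ℝ) 1, ψ ξ * sInt (w n ξ) φ
        = ∫ ζ in Set.Icc (0 : ℝ) 1, φ ζ * sInt (v n ζ) ψ)
    (hduall : ∀ φ ψ : ℝ → ℝ, Measurable φ → Measurable ψ →
      (∃ B, ∀ x, |φ x| ≤ B) → (∃ B, ∀ x, |ψ x| ≤ B) →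
      ∫ ξ in Set.Icc (0 : ℝ) 1, ψ ξ * sInt (wl ξ) φ
        = ∫ ζ in Set.Icc (0 : ℝ) 1, φ ζ * sInt (vl ζ) ψ)
    (hwsξ : ∀ g : ℝ → ℝ → ℝ, Measurable (Function.uncurry g) →
      (∀ ξ, Continuous (g ξ)) → (∃ B, ∀ ξ ζ, |g ξ ζ| ≤ B) →
      Tendsto (fun n => ∫ ξ in Set.Icc (0 : ℝ) 1, sInt (w n ξ) (g ξ)) atTop
        (nhds (∫ ξ in Set.Icc (0 : ℝ) 1, sInt (wl ξ) (g ξ))))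
    (φ : ℕ → ℝ → ℝ) (φl : ℝ → ℝ) (hφm : ∀ n, Measurable (φ n)) (hφlm : Measurable φl)
    (Bφ : ℝ) (hφB : ∀ n ζ, |φ n ζ| ≤ Bφ) (hφlB : ∀ ζ, |φl ζ| ≤ Bφ)
    (hφL1 : Tendsto (fun n => ∫ ζ in Set.Icc (0 : ℝ) 1, |φ n ζ - φl ζ|) atTop (nhds 0)) :
    ∀ ψ : ℝ → ℝ, Integrable ψ (volume.restrict (Set.Icc (0 : ℝ) 1)) →
      Tendsto (fun n => ∫ ξ in Set.Icc (0 : ℝ) 1, ψ ξ * sInt (w n ξ) (φ n)) atTop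
        (nhds (∫ ξ in Set.Icc (0 : ℝ) 1, ψ ξ * sInt (wl ξ) φl)) := by
  have hW : ∀ n, IsExtendedGraphon _ (w n) (v n) M.toNNReal :=
    fun n => ⟨hmeas n, hMw n, hMv n, hdual n⟩
  have hWl : IsExtendedGraphon _ wl vl M.toNNReal := ⟨hmeasl, hMwl, hMvl, hduall⟩
  exact fun ψ hψ => TendstoWeakStar.tendsto_integral_mul_sInt_of_integrable hwsξ hW hWl hφm hφlm
    hφB hφlB hφL1 hψ

/-- Joint weak-star continuity of the extended-graphon pairing: if the extended
graphons `w_n` (with both disintegrations `w_n ∈ L^∞_ξ M_ζ`, `v_n ∈ L^∞_ζ M_ξ`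
uniformly bounded) converge weakly-star to `w` in `L^∞_ξ M_ζ ∩ L^∞_ζ M_ξ`
(i.e. tested against `g ∈ L¹ C` in both orders), and `φ_n → φ` strongly in `L¹([0,1])`
with `sup_n ‖φ_n‖_{L^∞} < ∞`, then `∫₀¹ φ_n(ζ) w_n(·,dζ) → ∫₀¹ φ(ζ) w(·,dζ)`
weakly-star in `L^∞([0,1])`. -/
theorem extended_graphon_weak_star_continuity
    (w : ℕ → ℝ → SignedMeasure ℝ) (wl : ℝ → SignedMeasure ℝ)
    (v : ℕ → ℝ → SignedMeasure ℝ) (vl : ℝ → SignedMeasure ℝ) (M : ℝ)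
    (hmeas : ∀ n, ∀ φ : ℝ → ℝ, Measurable φ → (∃ B, ∀ ζ, |φ ζ| ≤ B) →
      Measurable (fun ξ => sInt (w n ξ) φ))
    (hmeasl : ∀ φ : ℝ → ℝ, Measurable φ → (∃ B, ∀ ζ, |φ ζ| ≤ B) →
      Measurable (fun ξ => sInt (wl ξ) φ))
    (hMw : ∀ n, ∀ᵐ ξ ∂(volume.restrict (Set.Icc (0 : ℝ) 1)),
      (w n ξ).totalVariation Set.univ ≤ ENNReal.ofReal M)
    (hMv : ∀ n, ∀ᵐ ζ ∂(volume.restrict (Set.Icc (0 : ℝ) 1)),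
      (v n ζ).totalVariation Set.univ ≤ ENNReal.ofReal M)
    (hMwl : ∀ᵐ ξ ∂(volume.restrict (Set.Icc (0 : ℝ) 1)),
      (wl ξ).totalVariation Set.univ ≤ ENNReal.ofReal M)
    (hMvl : ∀ᵐ ζ ∂(volume.restrict (Set.Icc (0 : ℝ) 1)),
      (vl ζ).totalVariation Set.univ ≤ ENNReal.ofReal M)
    (hdual : ∀ n, ∀ φ ψ : ℝ → ℝ, Measurable φ → Measurable ψ →
      (∃ B, ∀ x, |φ x| ≤ B) → (∃ B, ∀ x, |ψ x| ≤ B) →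
      ∫ ξ in Set.Icc (0 : ℝ) 1, ψ ξ * sInt (w n ξ) φ
        = ∫ ζ in Set.Icc (0 : ℝ) 1, φ ζ * sInt (v n ζ) ψ)
    (hduall : ∀ φ ψ : ℝ → ℝ, Measurable φ → Measurable ψ →
      (∃ B, ∀ x, |φ x| ≤ B) → (∃ B, ∀ x, |ψ x| ≤ B) →
      ∫ ξ in Set.Icc (0 : ℝ) 1, ψ ξ * sInt (wl ξ) φ
        = ∫ ζ in Set.Icc (0 : ℝ) 1, φ ζ * sInt (vl ζ) ψ)
    (hwsξ : ∀ g : ℝ → ℝ → ℝ, Measurable (Function.uncurry g) →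
      (∀ ξ, Continuous (g ξ)) → (∃ B, ∀ ξ ζ, |g ξ ζ| ≤ B) →
      Tendsto (fun n => ∫ ξ in Set.Icc (0 : ℝ) 1, sInt (w n ξ) (g ξ)) atTop
        (nhds (∫ ξ in Set.Icc (0 : ℝ) 1, sInt (wl ξ) (g ξ))))
    (hwsζ : ∀ g : ℝ → ℝ → ℝ, Measurable (Function.uncurry g) →
      (∀ ζ, Continuous fun ξ => g ξ ζ) → (∃ B, ∀ ξ ζ, |g ξ ζ| ≤ B) →
      Tendsto (fun n => ∫ ζ in Set.Icc (0 : ℝ) 1, sInt (v n ζ) (fun ξ => g ξ ζ)) atTop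
        (nhds (∫ ζ in Set.Icc (0 : ℝ) 1, sInt (vl ζ) (fun ξ => g ξ ζ))))
    (φ : ℕ → ℝ → ℝ) (φl : ℝ → ℝ) (hφm : ∀ n, Measurable (φ n)) (hφlm : Measurable φl)
    (Bφ : ℝ) (hφB : ∀ n ζ, |φ n ζ| ≤ Bφ) (hφlB : ∀ ζ, |φl ζ| ≤ Bφ)
    (hφL1 : Tendsto (fun n => ∫ ζ in Set.Icc (0 : ℝ) 1, |φ n ζ - φl ζ|) atTop (nhds 0)) :
    ∀ ψ : ℝ → ℝ, Integrable ψ (volume.restrict (Set.Icc (0 : ℝ) 1)) →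
      Tendsto (fun n => ∫ ξ in Set.Icc (0 : ℝ) 1, ψ ξ * sInt (w n ξ) (φ n)) atTop
        (nhds (∫ ξ in Set.Icc (0 : ℝ) 1, ψ ξ * sInt (wl ξ) φl)) :=
  extended_graphon_weak_star_continuity_general w wl v vl M hmeas hmeasl hMw hMv hMwl hMvl hdual
    hduall hwsξ φ φl hφm hφlm Bφ hφB hφlB hφL1
end

section
/- Let h : [0,1] → ℝ be measurable, 0 ≤ h ≤ 2, and suppose [0,1] is partitioned (up to measure zero) into n_k intervals I_k^i of length 1/n_k, with associated values s_k^i ≤ t_k^i such that s_k^i < h(y) ≤ t_k^i for a.e. y ∈ I_k^i. Then for any 0 < τ < 1/n_k, ∫₀¹ |h(y) − h(y+τ)| dy ≤ (1/n_k) ∑_{i=1}^{n_k} (t_k^i − s_k^i) + 2 τ n_k (where h is extended by 0 outside [0,1]). -/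
open MeasureTheory Set

section ShiftDifference

variable {h : ℝ → ℝ} {M : ℝ}

theorem abs_sub_le_of_forall_nonneg_le (hrange : ∀ y, 0 ≤ h y ∧ h y ≤ M) (y z : ℝ) :
    |h y - h z| ≤ M :=
  abs_sub_le_of_nonneg_of_le (hrange y).1 (hrange y).2 (hrange z).1 (hrange z).2

theorem intervalIntegrable_abs_sub_comp_add (hmeas : Measurable h)
    (hrange : ∀ y, 0 ≤ h y ∧ h y ≤ M) (τ a b : ℝ) :
    IntervalIntegrable (fun y => |h y - h (y + τ)|) volume a b :=
  (intervalIntegrable_const (c := M)).mono_fun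
    (hmeas.sub (hmeas.comp (measurable_add_const τ))).abs.aestronglyMeasurable
    (ae_of_all _ fun y => by
      simpa only [Real.norm_eq_abs, abs_abs] using
        (abs_sub_le_of_forall_nonneg_le hrange y (y + τ)).trans (le_abs_self M))

/-- On `[a, b - τ]` both `y` and `y + τ` lie in `[a, b)`, where `h` takes values in `(s, t]`;
on the remaining piece of length `τ` the difference is only bounded by `M`. -/
theorem intervalIntegral_abs_sub_comp_add_le (hmeas : Measurable h)
    (hrange : ∀ y, 0 ≤ h y ∧ h y ≤ M) {s t a b τ : ℝ} (hτ : 0 ≤ τ) (hab : a + τ ≤ b)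
    (hlevel : ∀ᵐ y, y ∈ Ico a b → s < h y ∧ h y ≤ t) :
    ∫ y in a..b, |h y - h (y + τ)| ≤ (t - s) * (b - τ - a) + M * τ := by
  have hint := intervalIntegrable_abs_sub_comp_add hmeas hrange τ
  have hlevel_shift : ∀ᵐ y, y + τ ∈ Ico a b → s < h (y + τ) ∧ h (y + τ) ≤ t :=
    (measurePreserving_add_right volume τ).quasiMeasurePreserving.ae hlevel
  have good : ∫ y in a..b - τ, |h y - h (y + τ)| ≤ (t - s) * (b - τ - a) := by
    refine (Real.le_norm_self _).trans ?_
    refine (intervalIntegral.norm_integral_le_of_norm_le_const_ae ?_).trans_eq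
      (by rw [abs_of_nonneg (by linarith)])
    filter_upwards [hlevel, hlevel_shift, volume.ae_ne (b - τ)] with y hy hyτ hne hmem
    rw [uIoc_of_le (by linarith)] at hmem
    have hlt : y < b - τ := lt_of_le_of_ne hmem.2 hne
    obtain ⟨h₁, h₂⟩ := hy ⟨hmem.1.le, by linarith⟩
    obtain ⟨h₃, h₄⟩ := hyτ ⟨by linarith [hmem.1], by linarith⟩
    rw [Real.norm_eq_abs, abs_abs]
    exact abs_sub_le_iff.2 ⟨by linarith, by linarith⟩
  have bad : ∫ y in b - τ..b, |h y - h (y + τ)| ≤ M * τ := by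
    refine (Real.le_norm_self _).trans ?_
    refine (intervalIntegral.norm_integral_le_of_norm_le_const fun y _ => ?_).trans_eq
      (by rw [sub_sub_cancel, abs_of_nonneg hτ])
    rw [Real.norm_eq_abs, abs_abs]
    exact abs_sub_le_of_forall_nonneg_le hrange y (y + τ)
  rw [← intervalIntegral.integral_add_adjacent_intervals (hint a (b - τ)) (hint _ _)]
  exact add_le_add good bad

end ShiftDifference

theorem setIntegral_Icc_zero_one_eq_sum_intervalIntegral {E : Type*} [NormedAddCommGroup E]
    [NormedSpace ℝ E] {f : ℝ → E} (hf : ∀ a b, IntervalIntegrable f volume a b) {n : ℕ}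
    (hn : n ≠ 0) :
    ∫ y in Icc (0 : ℝ) 1, f y = ∑ i : Fin n, ∫ y in (i : ℝ) / n..((i : ℕ) + 1 : ℝ) / n, f y := by
  have hsum := intervalIntegral.sum_integral_adjacent_intervals
    (a := fun k : ℕ => (k : ℝ) / n) (n := n) (μ := volume) (f := f) fun k _ => hf _ _
  rw [integral_Icc_eq_integral_Ioc, ← intervalIntegral.integral_of_le zero_le_one,
    Fin.sum_univ_eq_sum_range (fun k => ∫ y in (k : ℝ) / n..((k : ℝ) + 1) / n, f y)]
  simpa [div_self (Nat.cast_ne_zero (R := ℝ) |>.2 hn)] using hsum.symm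

theorem l1_modulus_partition_general (n : ℕ) (hn : 0 < n) (h : ℝ → ℝ) (hmeas : Measurable h)
    (hrange : ∀ y, 0 ≤ h y ∧ h y ≤ 2)
    (s t : Fin n → ℝ) (hst : ∀ i, s i ≤ t i)
    (hlevel : ∀ i : Fin n, ∀ᵐ y ∂volume,
      y ∈ Set.Ico ((i : ℝ) / n) (((i : ℕ) + 1 : ℝ) / n) → s i < h y ∧ h y ≤ t i)
    (τ : ℝ) (hτ : 0 < τ) (hτn : τ < 1 / n) :
    ∫ y in Set.Icc (0 : ℝ) 1, |h y - h (y + τ)|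
      ≤ (∑ i, (t i - s i)) / n + 2 * τ * n := by
  have hlength (i : Fin n) : ((i : ℕ) + 1 : ℝ) / n - (i : ℝ) / n = 1 / n := by ring
  have hcell (i : Fin n) : ∫ y in (i : ℝ) / n..((i : ℕ) + 1 : ℝ) / n, |h y - h (y + τ)|
      ≤ (t i - s i) / n + 2 * τ := by
    refine (intervalIntegral_abs_sub_comp_add_le hmeas hrange hτ.le
      (by linarith [hlength i]) (hlevel i)).trans ?_
    have : (t i - s i) * (((i : ℕ) + 1 : ℝ) / n - τ - (i : ℝ) / n) ≤ (t i - s i) * (1 / n) :=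
      mul_le_mul_of_nonneg_left (by linarith [hlength i]) (sub_nonneg.2 (hst i))
    rw [mul_one_div] at this
    linarith
  rw [setIntegral_Icc_zero_one_eq_sum_intervalIntegral
    (intervalIntegrable_abs_sub_comp_add hmeas hrange τ) hn.ne']
  calc _ ≤ ∑ i : Fin n, ((t i - s i) / n + 2 * τ) := Finset.sum_le_sum fun i _ => hcell i
    _ = (∑ i, (t i - s i)) / n + 2 * τ * n := by
      simp only [Finset.sum_add_distrib, ← Finset.sum_div, Finset.sum_const, Finset.card_univ,
        Fintype.card_fin, nsmul_eq_mul]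
      ring

/-- `L¹` modulus-of-continuity estimate: let `0 ≤ h ≤ 2` vanish outside `[0,1]`, and
suppose `[0,1]` is partitioned (up to a null set) into `n` intervals
`I_i = [i/n, (i+1)/n)` with values `s_i ≤ t_i` such that `s_i < h(y) ≤ t_i` for a.e.
`y ∈ I_i`. Then for any `0 < τ < 1/n`,
`∫₀¹ |h(y) − h(y+τ)| dy ≤ (1/n) ∑ᵢ (tᵢ − sᵢ) + 2 τ n`. -/
theorem l1_modulus_partition (n : ℕ) (hn : 0 < n) (h : ℝ → ℝ) (hmeas : Measurable h)
    (hrange : ∀ y, 0 ≤ h y ∧ h y ≤ 2)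
    (hext : ∀ y, y ∉ Set.Icc (0 : ℝ) 1 → h y = 0)
    (s t : Fin n → ℝ) (hst : ∀ i, s i ≤ t i)
    (hlevel : ∀ i : Fin n, ∀ᵐ y ∂volume,
      y ∈ Set.Ico ((i : ℝ) / n) (((i : ℕ) + 1 : ℝ) / n) → s i < h y ∧ h y ≤ t i)
    (τ : ℝ) (hτ : 0 < τ) (hτn : τ < 1 / n) :
    ∫ y in Set.Icc (0 : ℝ) 1, |h y - h (y + τ)|
      ≤ (∑ i, (t i - s i)) / n + 2 * τ * n :=
  l1_modulus_partition_general n hn h hmeas hrange s t hst hlevel τ hτ hτn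
end

section
/- Let (a_n(t))_{n ≥ 1} be nonnegative functions on [s, t*] satisfying a_n' (t) ≤ n A a_{n+1}(t) for all n (in integrated form), with A > 0. Then for every m > n and t ∈ [s, t*]: a_n(t) ≤ A^{m-n} ∫_s^t [(m-1)!/( (n-1)! (m-n-1)! )] (t-r)^{m-n-1} a_m(r) dr + ∑_{k=n}^{m-1} A^{k-n} [(k-1)!/((n-1)!(k-n)!)] (t-s)^{k-n} a_k(s). -/
/-!
Induction on `m`. Substituting `a_m(r) ≤ a_m(s) + m A ∫_s^r a_{m+1}` into the kernel integral
`∫_s^t (t - r)^p a_m(r) dr` yields the next boundary term, via `∫_s^t (t - r)^p dr = (t - s)^{p+1}/(p+1)`,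
and the next kernel, via Cauchy's formula for repeated integration
`∫_s^t (t - r)^p ∫_s^r g = (p + 1)⁻¹ ∫_s^t (t - r)^{p+1} g`, which is an integration by parts.
The factorial coefficients are exactly what these two identities produce.
-/

open MeasureTheory intervalIntegral Set
open scoped Interval Nat

theorem integral_sub_pow_mul_primitive {g : ℝ → ℝ} {s t : ℝ} (hg : ContinuousOn g [[s, t]])
    (p : ℕ) :
    ∫ r in s..t, (t - r) ^ p * ∫ u in s..r, g u =
      (∫ r in s..t, (t - r) ^ (p + 1) * g r) / (p + 1) := by
  have hF : ∀ x ∈ Ioo (min s t) (max s t), HasDerivAt (fun r => ∫ u in s..r, g u) (g x) x :=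
    fun x hx => integral_hasDerivAt_right
      (hg.mono (uIcc_subset_uIcc_left (Ioo_subset_Icc_self hx))).intervalIntegrable
      (hg.mono Ioo_subset_Icc_self |>.stronglyMeasurableAtFilter isOpen_Ioo x hx)
      (hg.continuousAt (Icc_mem_nhds hx.1 hx.2))
  have hv : ∀ x, HasDerivAt (fun r => -(t - r) ^ (p + 1) / (p + 1)) ((t - x) ^ p) x := by
    intro x
    refine ((((hasDerivAt_id' x).const_sub t).pow (p + 1)).neg.div_const _).congr_deriv ?_
    rw [Nat.add_sub_cancel]
    push_cast
    field_simp
  have hibp := integral_mul_deriv_eq_deriv_mul_of_hasDerivAt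
    (continuousOn_primitive_interval hg.integrableOn_uIcc) (by fun_prop) hF (fun x _ => hv x)
    hg.intervalIntegrable ((by fun_prop : Continuous fun r => (t - r) ^ p).intervalIntegrable s t)
  simp only [sub_self, integral_same, zero_pow p.succ_ne_zero, neg_zero, zero_div, mul_zero,
    zero_mul, zero_sub] at hibp
  rw [integral_congr (fun r _ => mul_comm _ _), hibp, ← intervalIntegral.integral_div,
    ← intervalIntegral.integral_neg]
  congr 1 with r
  ring

theorem integral_sub_pow (s t : ℝ) (p : ℕ) :
    ∫ r in s..t, (t - r) ^ p = (t - s) ^ (p + 1) / (p + 1) := by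
  simp [integral_comp_sub_left fun x => x ^ p]

theorem integral_sub_pow_mul_le {f g : ℝ → ℝ} {s t B : ℝ} (hst : s ≤ t)
    (hf : ContinuousOn f (Icc s t)) (hg : ContinuousOn g (Icc s t))
    (hfg : ∀ r ∈ Icc s t, f r ≤ f s + B * ∫ u in s..r, g u) (p : ℕ) :
    ∫ r in s..t, (t - r) ^ p * f r ≤
      (t - s) ^ (p + 1) / (p + 1) * f s + B / (p + 1) * ∫ r in s..t, (t - r) ^ (p + 1) * g r := by
  rw [← uIcc_of_le hst] at hf hg
  have hpow : ContinuousOn (fun r => (t - r) ^ p) [[s, t]] := by fun_prop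
  have hF := continuousOn_primitive_interval (μ := volume) hg.integrableOn_uIcc
  have h₁ : IntervalIntegrable (fun r => f s * (t - r) ^ p) volume s t :=
    (continuousOn_const.mul hpow).intervalIntegrable
  have h₂ : IntervalIntegrable (fun r => B * ((t - r) ^ p * ∫ u in s..r, g u)) volume s t :=
    (continuousOn_const.mul (hpow.mul hF)).intervalIntegrable
  calc ∫ r in s..t, (t - r) ^ p * f r
      ≤ ∫ r in s..t, f s * (t - r) ^ p + B * ((t - r) ^ p * ∫ u in s..r, g u) := by
        refine integral_mono_on hst (hpow.mul hf).intervalIntegrable (h₁.add h₂) fun r hr => ?_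
        have := mul_le_mul_of_nonneg_left (hfg r (uIcc_of_le hst ▸ hr))
          (pow_nonneg (sub_nonneg.2 hr.2) p)
        linarith
    _ = (t - s) ^ (p + 1) / (p + 1) * f s
          + B / (p + 1) * ∫ r in s..t, (t - r) ^ (p + 1) * g r := by
        rw [integral_add h₁ h₂, intervalIntegral.integral_const_mul,
          intervalIntegral.integral_const_mul,
          integral_sub_pow, integral_sub_pow_mul_primitive hg]
        ring

theorem le_hierarchy_expansion {A s t : ℝ} {a : ℕ → ℝ → ℝ} {n : ℕ} (hn : 0 < n) (hA : 0 ≤ A)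
    (hst : s ≤ t) (hcont : ∀ k, ContinuousOn (a k) (Icc s t))
    (hineq : ∀ k, n ≤ k → ∀ r ∈ Icc s t, a k r ≤ a k s + ∫ x in s..r, k * A * a (k + 1) x)
    (j : ℕ) :
    a n t ≤ A ^ (j + 1) *
        (∫ r in s..t, ((n + j)! / ((n - 1)! * j !) : ℝ) * (t - r) ^ j * a (n + j + 1) r)
      + ∑ i ∈ Finset.range (j + 1),
          A ^ i * ((n + i - 1)! / ((n - 1)! * i !) : ℝ) * (t - s) ^ i * a (n + i) s := by
  have hpull : ∀ (c : ℝ) (p k : ℕ),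
      ∫ r in s..t, c * (t - r) ^ p * a k r = c * ∫ r in s..t, (t - r) ^ p * a k r := by
    intro c p k
    simp_rw [mul_assoc]
    exact intervalIntegral.integral_const_mul _ _
  have hineq_mul : ∀ k, n ≤ k → ∀ r ∈ Icc s t,
      a k r ≤ a k s + (k * A) * ∫ x in s..r, a (k + 1) x := fun k hk r hr => by
    simpa only [intervalIntegral.integral_const_mul] using hineq k hk r hr
  induction j with
  | zero =>
    obtain ⟨q, rfl⟩ := Nat.exists_eq_add_one_of_ne_zero hn.ne'
    have := hineq_mul (q + 1) le_rfl t ⟨hst, le_rfl⟩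
    simp only [zero_add, add_zero, pow_one, pow_zero, Finset.sum_range_one, Nat.factorial_zero,
      Nat.cast_one, mul_one, one_mul, add_tsub_cancel_right, Nat.factorial_succ, Nat.cast_mul]
    rw [mul_div_cancel_right₀ _ (by positivity), div_self (by positivity), one_mul,
      intervalIntegral.integral_const_mul]
    linarith
  | succ j ih =>
    set m := n + j + 1 with hm
    have hstep := integral_sub_pow_mul_le hst (hcont m) (hcont (m + 1))
      (hineq_mul m (by omega)) j
    rw [hpull] at ih ⊢
    rw [Finset.sum_range_succ, ← add_assoc n j 1, ← hm, show m - 1 = n + j by omega]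
    calc a n t ≤ _ := ih
      _ ≤ A ^ (j + 1) * ((n + j)! / ((n - 1)! * j !) * ((t - s) ^ (j + 1) / (j + 1) * a m s
            + m * A / (j + 1) * ∫ r in s..t, (t - r) ^ (j + 1) * a (m + 1) r))
          + ∑ i ∈ Finset.range (j + 1),
            A ^ i * ((n + i - 1)! / ((n - 1)! * i !) : ℝ) * (t - s) ^ i * a (n + i) s := by
        gcongr
      _ = _ := by
        rw [hm, Nat.factorial_succ (n + j), Nat.factorial_succ j]
        push_cast
        field_simp
        ring

theorem iterated_hierarchy_bound_general (A s tstar : ℝ) (hA : 0 < A)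
    (a : ℕ → ℝ → ℝ)
    (hcont : ∀ n, ContinuousOn (a n) (Set.Icc s tstar))
    (hineq : ∀ n : ℕ, 1 ≤ n → ∀ t₁ t₂ : ℝ, s ≤ t₁ → t₁ ≤ t₂ → t₂ ≤ tstar →
      a n t₂ ≤ a n t₁ + ∫ r in t₁..t₂, (n : ℝ) * A * a (n + 1) r) :
    ∀ n m : ℕ, 1 ≤ n → n < m → ∀ t ∈ Set.Icc s tstar,
      a n t ≤ A ^ (m - n) *
          (∫ r in s..t,
            ((Nat.factorial (m - 1) : ℝ) /
              ((Nat.factorial (n - 1) : ℝ) * (Nat.factorial (m - n - 1) : ℝ)))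
              * (t - r) ^ (m - n - 1) * a m r)
        + ∑ k ∈ Finset.Ico n m,
            A ^ (k - n) *
              ((Nat.factorial (k - 1) : ℝ) /
                ((Nat.factorial (n - 1) : ℝ) * (Nat.factorial (k - n) : ℝ)))
              * (t - s) ^ (k - n) * a k s := by
  intro n m hn hnm t ht
  obtain ⟨j, rfl⟩ := Nat.exists_eq_add_of_lt hnm
  have hexp := le_hierarchy_expansion hn hA.le ht.1
    (fun k => (hcont k).mono (Icc_subset_Icc_right ht.2))
    (fun k hk r hr => hineq k (hn.trans hk) s r le_rfl hr.1 (hr.2.trans ht.2)) j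
  rw [Finset.sum_Ico_eq_sum_range, show n + j + 1 - n = j + 1 by omega,
    show n + j + 1 - 1 = n + j by omega, show j + 1 - 1 = j by omega]
  simpa only [add_tsub_cancel_left] using hexp

/-- Iterated hierarchy inequality: if the nonnegative continuous functions `a_n` on
`[s, t*]` satisfy the integrated differential inequality
`a_n(t₂) ≤ a_n(t₁) + ∫_{t₁}^{t₂} n A a_{n+1}(r) dr`, then for every `m > n ≥ 1` and
`t ∈ [s, t*]`,
`a_n(t) ≤ A^{m-n} ∫_s^t [(m-1)!/((n-1)!(m-n-1)!)] (t-r)^{m-n-1} a_m(r) dr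
  + ∑_{k=n}^{m-1} A^{k-n} [(k-1)!/((n-1)!(k-n)!)] (t-s)^{k-n} a_k(s)`. -/
theorem iterated_hierarchy_bound (A s tstar : ℝ) (hA : 0 < A) (hs : s ≤ tstar)
    (a : ℕ → ℝ → ℝ)
    (hnn : ∀ n t, t ∈ Set.Icc s tstar → 0 ≤ a n t)
    (hcont : ∀ n, ContinuousOn (a n) (Set.Icc s tstar))
    (hineq : ∀ n : ℕ, 1 ≤ n → ∀ t₁ t₂ : ℝ, s ≤ t₁ → t₁ ≤ t₂ → t₂ ≤ tstar →
      a n t₂ ≤ a n t₁ + ∫ r in t₁..t₂, (n : ℝ) * A * a (n + 1) r) :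
    ∀ n m : ℕ, 1 ≤ n → n < m → ∀ t ∈ Set.Icc s tstar,
      a n t ≤ A ^ (m - n) *
          (∫ r in s..t,
            ((Nat.factorial (m - 1) : ℝ) /
              ((Nat.factorial (n - 1) : ℝ) * (Nat.factorial (m - n - 1) : ℝ)))
              * (t - r) ^ (m - n - 1) * a m r)
        + ∑ k ∈ Finset.Ico n m,
            A ^ (k - n) *
              ((Nat.factorial (k - 1) : ℝ) /
                ((Nat.factorial (n - 1) : ℝ) * (Nat.factorial (k - n) : ℝ)))
              * (t - s) ^ (k - n) * a k s :=
  iterated_hierarchy_bound_general A s tstar hA a hcont hineq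
end

section
/- Let (a_n)_{n≥1} be a sequence of nonnegative reals with a_n ≤ λ^{-n/2} for all n and some λ > 0, and suppose for some μ ∈ (0, λ), integers m > n, and s < t with A(t−s) ≤ θλ (θ ∈ (0, 1/2)), the iterated hierarchy bound a_n(t)² ≤ A^{m-n} binom(m-1, n-1) (t-s)^{m-n} λ^{-m} + ∑_{k=n}^{m-1} A^{k-n} binom(k-1, n-1) (t-s)^{k-n} a_k(s)² holds. Then, using binom(m-1,n-1) ≤ 2^{m-1} and letting m → ∞ when 2θ < 1, one obtains (θλ)^n a_n(t)² ≤ (1/(2(1−2θ^{1/p'}))) · sup_k (θλ)^{k/p} λ^{k/p'} a_k(s)^{2} for any p > 1 with 2θ^{1/p'} < 1. -/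
/-!
Bound `binom(k-1, n-1) ≤ 2^(k-1)` and `A (t-s) ≤ θλ`, so that after multiplying the hierarchy
bound by `(θλ)^n` the remainder term is at most `(2θ)^m / 2` and the `k`-th summand is at most
`2^(k-1) (θλ)^k c_k²`. Splitting `(θλ)^k = θ^(k/p') · (θλ)^(k/p) λ^(k/p')` (Hölder-type
interpolation, since `1/p + 1/p' = 1`) bounds that summand by `(2 θ^(1/p'))^k S / 2`, and the
geometric series with ratio `2 θ^(1/p') < 1` sums to at most `S / (2 (1 - 2 θ^(1/p')))`.
Letting `m → ∞` kills the remainder because `2θ < 1`.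
-/

open Finset Filter Topology

lemma two_mul_choose_pred_le_two_pow {k : ℕ} (hk : 1 ≤ k) (j : ℕ) :
    2 * (k - 1).choose j ≤ 2 ^ k := by
  calc 2 * (k - 1).choose j ≤ 2 * 2 ^ (k - 1) := by gcongr; exact Nat.choose_le_two_pow _ _
    _ = 2 ^ k := by rw [← pow_succ', Nat.sub_add_cancel hk]

lemma hierarchy_coeff_mul_le {A ts L x : ℝ} {n k : ℕ} (hA : 0 ≤ A) (hts : 0 ≤ ts)
    (hAts : A * ts ≤ L) (hnk : n ≤ k) (hk : 1 ≤ k) (hx : 0 ≤ x) :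
    L ^ n * (A ^ (k - n) * ((k - 1).choose (n - 1) : ℝ) * ts ^ (k - n) * x)
      ≤ 2 ^ k / 2 * (L ^ k * x) := by
  have hL : 0 ≤ L := (mul_nonneg hA hts).trans hAts
  have hpow : A ^ (k - n) * ts ^ (k - n) ≤ L ^ (k - n) := by
    rw [← mul_pow]; exact pow_le_pow_left₀ (mul_nonneg hA hts) hAts _
  have hchoose : ((k - 1).choose (n - 1) : ℝ) ≤ 2 ^ k / 2 := by
    rw [le_div_iff₀ two_pos, mul_comm]
    exact_mod_cast two_mul_choose_pred_le_two_pow hk (n - 1)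
  calc L ^ n * (A ^ (k - n) * ((k - 1).choose (n - 1) : ℝ) * ts ^ (k - n) * x)
      = L ^ n * (((k - 1).choose (n - 1) : ℝ) * (A ^ (k - n) * ts ^ (k - n)) * x) := by ring
    _ ≤ L ^ n * (2 ^ k / 2 * L ^ (k - n) * x) := by gcongr
    _ = 2 ^ k / 2 * (L ^ k * x) := by
        rw [← Nat.add_sub_of_le hnk, pow_add, Nat.add_sub_cancel_left]; ring

lemma mul_pow_eq_rpow_mul_interpolate {x y p q : ℝ} (hx : 0 < x) (hy : 0 < y)
    (hpq : 1 / p + 1 / q = 1) (k : ℕ) :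
    (x * y) ^ k = (x ^ (1 / q)) ^ k * ((x * y) ^ ((k : ℝ) / p) * y ^ ((k : ℝ) / q)) := by
  have hsplit : (k : ℝ) = k / p + k / q := by
    rw [div_eq_mul_one_div, div_eq_mul_one_div (k : ℝ) q, ← mul_add, hpq, mul_one]
  conv_lhs => rw [← Real.rpow_natCast, hsplit, Real.rpow_add (mul_pos hx hy),
    Real.mul_rpow hx.le hy.le (z := (k : ℝ) / q)]
  rw [← Real.rpow_natCast (x ^ (1 / q)), ← Real.rpow_mul hx.le, one_div_mul_eq_div]
  ring

lemma le_of_eventually_le_pow_mul_add {q a B C : ℝ} (hq0 : 0 ≤ q) (hq1 : q < 1)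
    (h : ∀ᶠ m in atTop, a ≤ q ^ m * C + B) : a ≤ B := by
  have hlim : Tendsto (fun m : ℕ ↦ q ^ m * C + B) atTop (𝓝 B) := by
    simpa using ((tendsto_pow_atTop_nhds_zero_of_lt_one hq0 hq1).mul_const C).add_const B
  exact ge_of_tendsto hlim h

lemma hierarchy_remainder_le {lam θ A ts : ℝ} {n m : ℕ} (hlam : 0 < lam) (hts : 0 ≤ ts)
    (hA : 0 ≤ A) (hAts : A * ts ≤ θ * lam) (hnm : n < m) :
    (θ * lam) ^ n *
        (A ^ (m - n) * ((m - 1).choose (n - 1) : ℝ) * ts ^ (m - n) * lam ^ (-(m : ℤ)))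
      ≤ (2 * θ) ^ m * (1 / 2) := by
  calc _ ≤ 2 ^ m / 2 * ((θ * lam) ^ m * lam ^ (-(m : ℤ))) :=
        hierarchy_coeff_mul_le hA hts hAts hnm.le (by omega) (by positivity)
    _ = (2 * θ) ^ m * (1 / 2) := by
        rw [mul_pow, zpow_neg, zpow_natCast]; field_simp; ring

lemma hierarchy_sum_le {lam θ A ts p p' S : ℝ} {n : ℕ} {c : ℕ → ℝ} (hlam : 0 < lam)
    (hθ : 0 < θ) (hpp' : 1 / p + 1 / p' = 1) (hgeom : 2 * θ ^ (1 / p') < 1) (hts : 0 ≤ ts)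
    (hA : 0 ≤ A) (hAts : A * ts ≤ θ * lam) (hn : 1 ≤ n)
    (hS : ∀ k : ℕ, (θ * lam) ^ ((k : ℝ) / p) * lam ^ ((k : ℝ) / p') * c k ^ 2 ≤ S) (m : ℕ) :
    (θ * lam) ^ n * ∑ k ∈ Ico n m,
        A ^ (k - n) * ((k - 1).choose (n - 1) : ℝ) * ts ^ (k - n) * c k ^ 2
      ≤ 1 / (2 * (1 - 2 * θ ^ (1 / p'))) * S := by
  set r := 2 * θ ^ (1 / p') with hr
  have hr0 : 0 ≤ r := by positivity
  have hS0 : 0 ≤ S := (sq_nonneg _).trans (by simpa using hS 0)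
  have hsummand : ∀ k ∈ Ico n m, (θ * lam) ^ n *
      (A ^ (k - n) * ((k - 1).choose (n - 1) : ℝ) * ts ^ (k - n) * c k ^ 2) ≤ r ^ k / 2 * S := by
    intro k hk
    have hnk := (mem_Ico.1 hk).1
    calc _ ≤ 2 ^ k / 2 * ((θ * lam) ^ k * c k ^ 2) :=
          hierarchy_coeff_mul_le hA hts hAts hnk (hn.trans hnk) (sq_nonneg _)
      _ = 2 ^ k / 2 * ((θ ^ (1 / p')) ^ k *
            ((θ * lam) ^ ((k : ℝ) / p) * lam ^ ((k : ℝ) / p') * c k ^ 2)) := by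
          rw [mul_pow_eq_rpow_mul_interpolate hθ hlam hpp']; ring
      _ ≤ 2 ^ k / 2 * ((θ ^ (1 / p')) ^ k * S) := by gcongr; exact hS k
      _ = r ^ k / 2 * S := by rw [hr, mul_pow]; ring
  have hgeom_sum : ∑ k ∈ Ico n m, r ^ k ≤ 1 / (1 - r) :=
    (geom_sum_Ico_le_of_lt_one hr0 hgeom).trans
      (div_le_div_of_nonneg_right (pow_le_one₀ hr0 hgeom.le) (by linarith))
  calc _ ≤ ∑ k ∈ Ico n m, r ^ k / 2 * S := by rw [mul_sum]; exact sum_le_sum hsummand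
    _ = (∑ k ∈ Ico n m, r ^ k) / 2 * S := by rw [sum_div, sum_mul]
    _ ≤ 1 / (1 - r) / 2 * S := by gcongr
    _ = 1 / (2 * (1 - r)) * S := by rw [div_div, mul_comm (1 - r)]

theorem hierarchy_time_step_general (lam θ A ts p p' S : ℝ) (n : ℕ)
    (hlam : 0 < lam) (hθ : 0 < θ) (hθ2 : θ < 1 / 2)
    (hpp' : 1 / p + 1 / p' = 1) (hgeom : 2 * θ ^ (1 / p') < 1)
    (hts : 0 ≤ ts) (hA : 0 ≤ A) (hAts : A * ts ≤ θ * lam) (hn : 1 ≤ n)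
    (b c : ℕ → ℝ)
    (hhier : ∀ m : ℕ, n < m → b n ^ 2 ≤
        A ^ (m - n) * (Nat.choose (m - 1) (n - 1) : ℝ) * ts ^ (m - n) * lam ^ (-(m : ℤ))
        + ∑ k ∈ Finset.Ico n m,
            A ^ (k - n) * (Nat.choose (k - 1) (n - 1) : ℝ) * ts ^ (k - n) * c k ^ 2)
    (hS : ∀ k : ℕ, (θ * lam) ^ ((k : ℝ) / p) * lam ^ ((k : ℝ) / p') * c k ^ 2 ≤ S) :
    (θ * lam) ^ n * b n ^ 2 ≤ (1 / (2 * (1 - 2 * θ ^ (1 / p')))) * S := by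
  apply le_of_eventually_le_pow_mul_add (q := 2 * θ) (C := 1 / 2) (by positivity) (by linarith)
  filter_upwards [eventually_gt_atTop n] with m hnm
  calc (θ * lam) ^ n * b n ^ 2
      ≤ (θ * lam) ^ n *
          (A ^ (m - n) * ((m - 1).choose (n - 1) : ℝ) * ts ^ (m - n) * lam ^ (-(m : ℤ))
          + ∑ k ∈ Ico n m,
              A ^ (k - n) * ((k - 1).choose (n - 1) : ℝ) * ts ^ (k - n) * c k ^ 2) := by
        gcongr; exact hhier m hnm
    _ ≤ (2 * θ) ^ m * (1 / 2) + 1 / (2 * (1 - 2 * θ ^ (1 / p'))) * S := by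
        rw [mul_add]
        exact add_le_add (hierarchy_remainder_le hlam hts hA hAts hnm)
          (hierarchy_sum_le hlam hθ hpp' hgeom hts hA hAts hn hS m)

/-- Single-time-step estimate in the stability proof of the viscous non-exchangeable
Vlasov hierarchy. With `b_k = ‖h(t)‖_k`, `c_k = ‖h(s)‖_k`, both dominated by
`λ^{-k/2}`, `A(t−s) ≤ θλ` with `θ ∈ (0,1/2)`, and the iterated hierarchy bound
holding for each `m > n`, one gets, for any `p > 1` with `2 θ^{1/p'} < 1`
(`1/p + 1/p' = 1`), letting `m → ∞`:
`(θλ)^n b_n² ≤ (1/(2(1 − 2θ^{1/p'}))) · sup_k (θλ)^{k/p} λ^{k/p'} c_k²`. -/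
theorem hierarchy_time_step (lam θ A ts p p' S : ℝ) (n : ℕ)
    (hlam : 0 < lam) (hθ : 0 < θ) (hθ2 : θ < 1 / 2) (hp : 1 < p)
    (hpp' : 1 / p + 1 / p' = 1) (hgeom : 2 * θ ^ (1 / p') < 1)
    (hts : 0 ≤ ts) (hA : 0 ≤ A) (hAts : A * ts ≤ θ * lam) (hn : 1 ≤ n)
    (b c : ℕ → ℝ) (hbnn : ∀ k, 0 ≤ b k) (hcnn : ∀ k, 0 ≤ c k)
    (hbb : ∀ k, b k ≤ lam ^ (-(k : ℝ) / 2)) (hcb : ∀ k, c k ≤ lam ^ (-(k : ℝ) / 2))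
    (hhier : ∀ m : ℕ, n < m → b n ^ 2 ≤
        A ^ (m - n) * (Nat.choose (m - 1) (n - 1) : ℝ) * ts ^ (m - n) * lam ^ (-(m : ℤ))
        + ∑ k ∈ Finset.Ico n m,
            A ^ (k - n) * (Nat.choose (k - 1) (n - 1) : ℝ) * ts ^ (k - n) * c k ^ 2)
    (hS : ∀ k : ℕ, (θ * lam) ^ ((k : ℝ) / p) * lam ^ ((k : ℝ) / p') * c k ^ 2 ≤ S) :
    (θ * lam) ^ n * b n ^ 2 ≤ (1 / (2 * (1 - 2 * θ ^ (1 / p')))) * S :=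
  hierarchy_time_step_general lam θ A ts p p' S n hlam hθ hθ2 hpp' hgeom hts hA hAts hn b c hhier hS
end
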